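/- Let n ≥ 1, let η be the Haar probability measure on the orthogonal group O(n), let μ be a finite Borel measure on ℝⁿ, and let ν be a finite Borel measure on the unit sphere Sⁿ⁻¹. Define the Haar averages μ̄(A) = ∫_{O(n)} μ(U⁻¹A) dη(U) for Borel A ⊆ ℝⁿ, and ν̄(E) = ∫_{O(n)} ν(U⁻¹E) dη(U) for Borel E ⊆ Sⁿ⁻¹. Assume the pair (μ,ν) satisfies: (i) μ ≠ 0; (ii) ∫_{ℝⁿ} |x| dμ(x) < ∞ and, for every θ ∈ Sⁿ⁻¹, ∫_{ℝⁿ} ⟨x,θ⟩ dμ(x) + ∫_{Sⁿ⁻¹} ⟨x,θ⟩ dν(x) = 0; (iii) there is no hyperplane H ⊆ ℝⁿ with μ(ℝⁿ ∖ H) = 0 and ν(Sⁿ⁻¹ ∖ H) = 0. Then the pair (μ̄, ν̄) also satisfies (i), (ii) and (iii). (This shows the Haar-averaged surface area pair defining the mean Blaschke symmetral is admissible for the functional Minkowski problem.) -/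

import Mathlib

open MeasureTheory Filter Set Metric
open scoped Topology ENNReal RealInnerProductSpace

noncomputable section

abbrev Euc (n : ℕ) := EuclideanSpace ℝ (Fin n)

instance matrixMeasurableSpace (n : ℕ) :
    MeasurableSpace (Matrix (Fin n) (Fin n) ℝ) := MeasurableSpace.pi

/-- The orthogonal group `O(n)`, as the group of orthogonal `n × n` real matrices. -/
abbrev OGrp (n : ℕ) := Matrix.orthogonalGroup (Fin n) ℝ

/-- The action of an orthogonal matrix on `ℝⁿ`. -/
def ogAct {n : ℕ} (U : OGrp n) (x : Euc n) : Euc n :=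
  WithLp.toLp 2 ((U : Matrix (Fin n) (Fin n) ℝ).mulVec x)

/-- The Haar average `μ̄(A) = ∫_{O(n)} μ(U⁻¹ A) dη(U)`, realized as the bind
`∫_{O(n)} (U_♯ μ) dη(U)` of the pushforwards of `μ` under the group action. -/
def haarAvg {n : ℕ} (η : Measure (OGrp n)) (μ : Measure (Euc n)) : Measure (Euc n) :=
  η.bind fun U => μ.map (ogAct U)

/-- The admissibility conditions of the Falah–Rotem functional Minkowski problem for a pair
`(μ, ν)`, where `ν` is concentrated on the unit sphere. -/
structure FRAdmissible {n : ℕ} (μ ν : Measure (Euc n)) : Prop where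
  mu_ne_zero : μ ≠ 0
  first_moment : Integrable (fun x : Euc n => ‖x‖) μ
  centered : ∀ θ : Euc n, ‖θ‖ = 1 →
    (∫ x, ⟪x, θ⟫ ∂μ) + (∫ x, ⟪x, θ⟫ ∂ν) = 0
  not_hyperplane : ¬ ∃ (θ : Euc n) (c : ℝ), ‖θ‖ = 1 ∧
    μ {x : Euc n | ⟪x, θ⟫ ≠ c} = 0 ∧
    ν (sphere (0 : Euc n) 1 \ {x : Euc n | ⟪x, θ⟫ = c}) = 0


/-! Rotations preserve norms and transpose to their inverses in inner products, so averaging over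
`O(n)` keeps the total mass and the first moment, and turns `∫ ⟪x, θ⟫ dμ̄` into
`∫_{O(n)} ∫ ⟪x, U⁻¹θ⟫ dμ dη(U)`; the centering of `(μ, ν)` in every direction `U⁻¹θ` therefore
integrates to the centering of `(μ̄, ν̄)`. If `(μ̄, ν̄)` were concentrated on the hyperplane
`⟪x, θ⟫ = c`, then for `η`-almost every `U`, hence for some `U`, the pair `(μ, ν)` would be
concentrated on the hyperplane `⟪x, U⁻¹θ⟫ = c`. -/

open ProbabilityTheory

section Bind

variable {α β E : Type*} [MeasurableSpace α] [MeasurableSpace β]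

theorem measurable_map_of_measurable_uncurry {γ : Type*} [MeasurableSpace γ]
    {f : α → β → γ} (hf : Measurable (Function.uncurry f)) (μ : Measure β) [SFinite μ] :
    Measurable fun a => μ.map (f a) := by
  have hmap : ∀ a, μ.map (f a) = (μ.map (Prod.mk a)).map (Function.uncurry f) := fun a => by
    rw [Measure.map_map hf measurable_prodMk_left]
    rfl
  simp_rw [hmap]
  exact (Measure.measurable_map _ hf).comp Measurable.map_prodMk_left

theorem integral_bind [NormedAddCommGroup E] [NormedSpace ℝ E]
    (m : Measure α) (κ : Kernel α β) {f : β → E} (hf : Integrable f (m.bind κ)) :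
    ∫ x, f x ∂(m.bind κ) = ∫ a, ∫ x, f x ∂κ a ∂m := by
  rw [Measure.comp_eq_comp_const_apply] at hf ⊢
  rw [Kernel.integral_comp hf, Kernel.const_apply]

end Bind

section OrthogonalAction

variable {n : ℕ}

theorem ogAct_eq_toEuclideanLin (U : OGrp n) :
    ogAct U = Matrix.toEuclideanLin (U : Matrix (Fin n) (Fin n) ℝ) := rfl

theorem ogAct_mul (U V : OGrp n) (x : Euc n) : ogAct (U * V) x = ogAct U (ogAct V x) := by
  simp [ogAct, Matrix.mulVec_mulVec]

theorem ogAct_one (x : Euc n) : ogAct 1 x = x := by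
  simp [ogAct]

theorem ogAct_inv_ogAct (U : OGrp n) (x : Euc n) : ogAct U⁻¹ (ogAct U x) = x := by
  rw [← ogAct_mul, inv_mul_cancel, ogAct_one]

theorem inner_ogAct_left (U : OGrp n) (x y : Euc n) : ⟪ogAct U x, y⟫ = ⟪x, ogAct U⁻¹ y⟫ := by
  rw [ogAct_eq_toEuclideanLin, ogAct_eq_toEuclideanLin, Matrix.UnitaryGroup.inv_val,
    Matrix.star_eq_conjTranspose, Matrix.toEuclideanLin_conjTranspose_eq_adjoint,
    LinearMap.adjoint_inner_right]

theorem norm_ogAct (U : OGrp n) (x : Euc n) : ‖ogAct U x‖ = ‖x‖ := by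
  rw [← sq_eq_sq₀ (norm_nonneg _) (norm_nonneg _), ← real_inner_self_eq_norm_sq,
    ← real_inner_self_eq_norm_sq, inner_ogAct_left, ogAct_inv_ogAct]

theorem measurable_uncurry_ogAct : Measurable (Function.uncurry (@ogAct n)) := by
  have hentry : ∀ i j, Measurable fun U : OGrp n => (U : Matrix (Fin n) (Fin n) ℝ) i j :=
    fun i j => (measurable_pi_apply j).comp ((measurable_pi_apply i).comp measurable_subtype_coe)
  refine (WithLp.measurable_toLp 2 _).comp (measurable_pi_lambda _ fun i => ?_)
  simp only [Matrix.mulVec, dotProduct]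
  exact Finset.measurable_sum _ fun j _ => ((hentry i j).comp measurable_fst).mul
    ((measurable_pi_apply j).comp ((WithLp.measurable_ofLp 2 _).comp measurable_snd))

theorem measurable_ogAct (U : OGrp n) : Measurable (ogAct U) :=
  measurable_uncurry_ogAct.comp measurable_prodMk_left

end OrthogonalAction

section HaarAverage

variable {n : ℕ} (η : Measure (OGrp n)) (μ : Measure (Euc n))

theorem preimage_ogAct_sphere (U : OGrp n) (r : ℝ) :
    ogAct U ⁻¹' sphere 0 r = sphere 0 r := by
  ext x
  simp only [mem_preimage, mem_sphere_zero_iff_norm, norm_ogAct]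

def rotationKernel [SFinite μ] : Kernel (OGrp n) (Euc n) where
  toFun U := μ.map (ogAct U)
  measurable' := measurable_map_of_measurable_uncurry measurable_uncurry_ogAct μ

theorem haarAvg_eq_bind_rotationKernel [SFinite μ] : haarAvg η μ = η.bind (rotationKernel μ) :=
  rfl

theorem haarAvg_eq_zero_iff [SFinite μ] {s : Set (Euc n)} (hs : MeasurableSet s) :
    haarAvg η μ s = 0 ↔ ∀ᵐ U ∂η, μ (ogAct U ⁻¹' s) = 0 := by
  rw [haarAvg_eq_bind_rotationKernel, Measure.bind_apply hs (Kernel.aemeasurable _),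
    lintegral_eq_zero_iff ((rotationKernel μ).measurable_coe hs)]
  simp only [rotationKernel, Kernel.coe_mk, Measure.map_apply (measurable_ogAct _) hs]
  rfl

theorem lintegral_haarAvg_of_invariant [SFinite μ] {f : Euc n → ℝ≥0∞} (hf : Measurable f)
    (hinv : ∀ U x, f (ogAct U x) = f x) :
    ∫⁻ x, f x ∂haarAvg η μ = η univ * ∫⁻ x, f x ∂μ := by
  rw [haarAvg_eq_bind_rotationKernel, Measure.lintegral_bind (Kernel.aemeasurable _)
    hf.aemeasurable]
  simp only [rotationKernel, Kernel.coe_mk, lintegral_map hf (measurable_ogAct _), hinv,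
    lintegral_const, mul_comm]

theorem haarAvg_ne_zero [IsProbabilityMeasure η] [SFinite μ] (hμ : μ ≠ 0) : haarAvg η μ ≠ 0 := by
  have huniv : haarAvg η μ univ = μ univ := by
    simpa using lintegral_haarAvg_of_invariant (f := 1) η μ measurable_const fun _ _ => rfl
  rwa [← Measure.measure_univ_ne_zero, huniv, Measure.measure_univ_ne_zero]

theorem integrable_norm_haarAvg [IsFiniteMeasure η] [SFinite μ]
    (hμ : Integrable (fun x => ‖x‖) μ) : Integrable (fun x => ‖x‖) (haarAvg η μ) := by
  refine ⟨continuous_norm.aestronglyMeasurable, ?_⟩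
  have hfin := hμ.hasFiniteIntegral
  simp only [hasFiniteIntegral_iff_enorm, enorm_norm] at hfin ⊢
  rw [lintegral_haarAvg_of_invariant η μ measurable_enorm fun U x => by
    rw [← ofReal_norm, norm_ogAct, ofReal_norm]]
  exact ENNReal.mul_lt_top (measure_lt_top _ _) hfin

theorem integral_inner_haarAvg [IsFiniteMeasure η] [SFinite μ]
    (hμ : Integrable (fun x => ‖x‖) μ) (θ : Euc n) :
    ∫ x, ⟪x, θ⟫ ∂haarAvg η μ = ∫ U, ∫ x, ⟪x, ogAct U⁻¹ θ⟫ ∂μ ∂η := by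
  have hcont : Continuous fun x : Euc n => ⟪x, θ⟫ := continuous_id.inner continuous_const
  have hint : Integrable (fun x => ⟪x, θ⟫) (haarAvg η μ) :=
    ((integrable_norm_haarAvg η μ hμ).mul_const ‖θ‖).mono hcont.aestronglyMeasurable
      (Eventually.of_forall fun x => by simpa using norm_inner_le_norm (𝕜 := ℝ) x θ)
  rw [haarAvg_eq_bind_rotationKernel] at hint ⊢
  rw [integral_bind _ _ hint]
  congr 1 with U
  simp only [rotationKernel, Kernel.coe_mk]
  rw [integral_map (measurable_ogAct U).aemeasurable hcont.aestronglyMeasurable]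
  simp only [inner_ogAct_left]

end HaarAverage

theorem stmt18_general {n : ℕ}
    (η : Measure (OGrp n)) [IsProbabilityMeasure η]
    (μ ν : Measure (Euc n)) [IsFiniteMeasure μ] [IsFiniteMeasure ν]
    (hνs : ν (sphere (0 : Euc n) 1)ᶜ = 0)
    (hadm : FRAdmissible μ ν) :
    FRAdmissible (haarAvg η μ) (haarAvg η ν) := by
  have hνm : Integrable (fun x : Euc n => ‖x‖) ν := by
    refine Integrable.of_bound continuous_norm.aestronglyMeasurable 1 ?_
    filter_upwards [mem_ae_iff.mpr hνs] with x hx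
    simp [mem_sphere_zero_iff_norm.mp hx]
  refine ⟨haarAvg_ne_zero η μ hadm.mu_ne_zero, integrable_norm_haarAvg η μ hadm.first_moment,
    fun θ hθ => ?_, ?_⟩
  · have hν_eq : ∀ U : OGrp n, ∫ x, ⟪x, ogAct U⁻¹ θ⟫ ∂ν = -∫ x, ⟪x, ogAct U⁻¹ θ⟫ ∂μ := fun U =>
      eq_neg_of_add_eq_zero_right (hadm.centered _ (by rw [norm_ogAct, hθ]))
    rw [integral_inner_haarAvg η μ hadm.first_moment, integral_inner_haarAvg η ν hνm]
    simp_rw [hν_eq, integral_neg, add_neg_cancel]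
  · rintro ⟨θ, c, hθ, hμ, hν⟩
    have hmeas : Measurable fun x : Euc n => ⟪x, θ⟫ := measurable_id.inner measurable_const
    have hμset : MeasurableSet {x : Euc n | ⟪x, θ⟫ ≠ c} :=
      hmeas (measurableSet_singleton c).compl
    have hνset : MeasurableSet (sphere (0 : Euc n) 1 \ {x | ⟪x, θ⟫ = c}) :=
      isClosed_sphere.measurableSet.diff (hmeas (measurableSet_singleton c))
    obtain ⟨U, hμU, hνU⟩ := (((haarAvg_eq_zero_iff η μ hμset).mp hμ).and
      ((haarAvg_eq_zero_iff η ν hνset).mp hν)).exists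
    simp only [preimage_sdiff, preimage_ogAct_sphere, preimage_ofPred_eq, inner_ogAct_left]
      at hμU hνU
    exact hadm.not_hyperplane ⟨ogAct U⁻¹ θ, c, by rw [norm_ogAct, hθ], hμU, hνU⟩

theorem stmt18 {n : ℕ} (hn : 1 ≤ n)
    (η : Measure (OGrp n)) [IsProbabilityMeasure η]
    -- `η` is the Haar probability measure: it is left-invariant.
    (hη : ∀ g : OGrp n, η.map (fun u => g * u) = η)
    (μ ν : Measure (Euc n)) [IsFiniteMeasure μ] [IsFiniteMeasure ν]
    (hνs : ν (sphere (0 : Euc n) 1)ᶜ = 0)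
    (hadm : FRAdmissible μ ν) :
    FRAdmissible (haarAvg η μ) (haarAvg η ν) :=
  stmt18_general η μ ν hνs hadm

end
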